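/- arXiv:2505.23787 — 2 statements merged into one kernel-verified Lean document; each statement's English description precedes it below -/
import Mathlib

section
/- Let S be the smallest set of functions ℕ → ℕ containing all constant functions and the identity, closed under the operations f ↦ (x ↦ 2 * f x), f ↦ (x ↦ 2^(f x)), and (f, g) ↦ (x ↦ f x mod g x). Then for every t ∈ S there exist natural numbers A and B such that for every a, either t a is a power of two or t a ≤ A * max B a. -/
inductive S : (ℕ → ℕ) → Prop
  | const (c : ℕ) : S (fun _ => c)
  | id : S (fun x => x)
  | double {f : ℕ → ℕ} : S f → S (fun x => 2 * f x)
  | exp {f : ℕ → ℕ} : S f → S (fun x => 2 ^ f x)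
  | mod {f g : ℕ → ℕ} : S f → S g → S (fun x => f x % g x)

theorem stmt11 : ∀ t : ℕ → ℕ, S t →
    ∃ A B : ℕ, ∀ a : ℕ, (∃ k : ℕ, t a = 2 ^ k) ∨ t a ≤ A * max B a := by
  intro t ht
  induction ht with
  | const c =>
      refine ⟨c, 1, fun a => Or.inr ?_⟩
      calc c = c * 1 := (mul_one c).symm
        _ ≤ c * max 1 a := Nat.mul_le_mul_left c (le_max_left 1 a)
  | id =>
      exact ⟨1, 1, fun a => Or.inr (by simp)⟩
  | double hf ih =>
      obtain ⟨A, B, h⟩ := ih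
      rename_i f
      refine ⟨2 * A, B, fun a => ?_⟩
      show (∃ k, 2 * f a = 2 ^ k) ∨ 2 * f a ≤ _
      rcases h a with ⟨k, hk⟩ | hle
      · exact Or.inl ⟨k + 1, by rw [hk]; ring⟩
      · exact Or.inr (by rw [mul_assoc]; exact Nat.mul_le_mul_left 2 hle)
  | exp hf ih =>
      rename_i f
      exact ⟨0, 0, fun a => Or.inl ⟨f a, rfl⟩⟩
  | mod hf hg ihf ihg =>
      obtain ⟨Af, Bf, hfb⟩ := ihf
      obtain ⟨Ag, Bg, hgb⟩ := ihg
      refine ⟨Af + Ag, max Bf Bg, fun a => ?_⟩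
      rename_i f g
      have hmf : Af * max Bf a ≤ (Af + Ag) * max (max Bf Bg) a :=
        Nat.mul_le_mul (Nat.le_add_right _ _)
          (max_le_max (le_max_left _ _) (le_refl a))
      have hmg : Ag * max Bg a ≤ (Af + Ag) * max (max Bf Bg) a :=
        Nat.mul_le_mul (Nat.le_add_left _ _)
          (max_le_max (le_max_right _ _) (le_refl a))
      by_cases hg0 : g a = 0
      · simp only [hg0, Nat.mod_zero]
        rcases hfb a with hp | hle
        · exact Or.inl hp
        · exact Or.inr (le_trans hle hmf)
      · by_cases hgp : ∃ k, g a = 2 ^ k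
        · rcases hfb a with ⟨j, hj⟩ | hle
          · obtain ⟨k, hk⟩ := hgp
            simp only [hj, hk]
            by_cases hjk : k ≤ j
            · right
              have : 2 ^ j % 2 ^ k = 0 :=
                Nat.eq_zero_of_dvd_of_lt (pow_dvd_pow 2 hjk) |> fun _ =>
                  Nat.mod_eq_zero_of_dvd (pow_dvd_pow 2 hjk)
              rw [this]; exact Nat.zero_le _
            · left
              exact ⟨j, Nat.mod_eq_of_lt (Nat.pow_lt_pow_right one_lt_two (lt_of_not_ge hjk))⟩
          · right
            exact le_trans (le_trans (Nat.mod_le _ _) hle) hmf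
        · right
          rcases hgb a with hp | hle
          · exact absurd hp hgp
          · have : f a % g a < g a := Nat.mod_lt _ (Nat.pos_of_ne_zero hg0)
            exact le_trans (le_of_lt (lt_of_lt_of_le this hle)) hmg
end

section
/- Let S be the smallest set of functions ℕ → ℕ containing all constant functions and the identity, closed under the operations f ↦ (x ↦ 2 * f x), f ↦ (x ↦ 2^(f x)), and (f, g) ↦ (x ↦ f x mod g x). Then the squaring function x ↦ x^2 is not in S. -/
lemma S_key {t : ℕ → ℕ} (ht : S t) :
    ∃ A B : ℕ, ∀ a, (∃ k, t a = 2 ^ k) ∨ t a ≤ A * max B a := by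
  induction ht with
  | const c =>
      exact ⟨c, 1, fun a => Or.inr (le_trans (Nat.le_mul_of_pos_right c
        (lt_of_lt_of_le one_pos (le_max_left 1 a))) le_rfl)⟩
  | id =>
      exact ⟨1, 0, fun a => Or.inr (by simp)⟩
  | double hf ih =>
      obtain ⟨A, B, h⟩ := ih
      refine ⟨2 * A, B, fun a => ?_⟩
      rcases h a with ⟨k, hk⟩ | hle
      · exact Or.inl ⟨k + 1, by simp only [hk, pow_succ]; ring⟩
      · exact Or.inr (by rw [mul_assoc]; exact Nat.mul_le_mul_left 2 hle)
  | exp hf ih =>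
      exact ⟨0, 0, fun a => Or.inl ⟨_, rfl⟩⟩
  | @mod f g hf hg ihf ihg =>
      obtain ⟨A₁, B₁, h₁⟩ := ihf
      obtain ⟨A₂, B₂, h₂⟩ := ihg
      refine ⟨A₁ + A₂, max B₁ B₂, fun a => ?_⟩
      have mono₁ : A₁ * max B₁ a ≤ (A₁ + A₂) * max (max B₁ B₂) a :=
        Nat.mul_le_mul (Nat.le_add_right _ _)
          (max_le_max (le_max_left _ _) le_rfl)
      have mono₂ : A₂ * max B₂ a ≤ (A₁ + A₂) * max (max B₁ B₂) a :=
        Nat.mul_le_mul (Nat.le_add_left _ _)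
          (max_le_max (le_max_right _ _) le_rfl)
      rcases h₁ a with ⟨m, hm⟩ | hle₁
      · by_cases hg0 : g a = 0
        · exact Or.inl ⟨m, by simp [hg0, hm]⟩
        · rcases h₂ a with ⟨k, hk⟩ | hle₂
          · by_cases hmk : m < k
            · refine Or.inl ⟨m, ?_⟩
              simp only [hm, hk]
              exact Nat.mod_eq_of_lt (Nat.pow_lt_pow_right one_lt_two hmk)
            · refine Or.inr ?_
              have : (2:ℕ) ^ k ∣ 2 ^ m := pow_dvd_pow 2 (le_of_not_gt hmk)
              simp only [hm, hk, Nat.mod_eq_zero_of_dvd this]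
              exact Nat.zero_le _
          · refine Or.inr (le_trans ?_ mono₂)
            exact le_trans (le_of_lt (Nat.mod_lt _ (Nat.pos_of_ne_zero hg0))) hle₂
      · exact Or.inr (le_trans (le_trans (Nat.mod_le _ _) hle₁) mono₁)

theorem stmt12 : ¬ S (fun x => x ^ 2) := by
  intro h
  obtain ⟨A, B, hAB⟩ := S_key h
  set a := 2 * A + 2 * B + 3 with ha
  have hodd : Odd (a ^ 2) := by
    refine Odd.pow ?_
    exact ⟨A + B + 1, by ring⟩
  rcases hAB a with ⟨k, hk⟩ | hle
  · -- a^2 = 2^k, a^2 odd and > 1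
    have ha1 : 1 < a := by omega
    have : 1 < a ^ 2 := by nlinarith
    rcases Nat.eq_zero_or_pos k with rfl | hkpos
    · simp at hk; omega
    · have : 2 ∣ 2 ^ k := dvd_pow_self 2 hkpos.ne'
      rw [← hk] at this
      exact (Nat.not_even_iff_odd.mpr hodd) (even_iff_two_dvd.mpr this)
  · have hBa : max B a = a := max_eq_right (by omega)
    rw [hBa] at hle
    have hAa : A < a := by omega
    have : a ^ 2 > A * a := by nlinarith
    omega
end
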